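/- For every d ≥ 1 there exists a constant C_d > 0 such that for every convex set K ⊆ [-1/2, 1/2]^d and every a ∈ (0, 1], the number of indices j ∈ Z^d for which the cube a(j + [0,1]^d) intersects both the closure of K and the closure of the complement ℝ^d \ K is at most C_d a^{-(d-1)}. In other words, every convex subset of (-1/2, 1/2]^d satisfies the boundary condition. -/

import Mathlib

/-!
A cube of the grid `a ℤ^d` that meets both `closure K` and `closure Kᶜ` contains a frontier point
`x` of the convex set `K`, at which `K` has an outer normal `u`. Classify the boundary cubes by the
coordinate `i` in which `|u i|` is largest and by the sign of `u i`. Within one class, two cubes on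
a common line parallel to `e i` are at most `d` steps apart: if `y` lies in `closure K` and differs
from `x` by at most `a` in the other coordinates, the inequality `u ⬝ᵥ (y - x) ≤ 0` forces
`u i * (y i - x i) ≤ (d - 1) |u i| a`, which, used at one cube or the other according to the
sign, bounds their distance. As `K ⊆ [-1/2, 1/2]^d`, there are `O(a^{-(d-1)})` such lines.
-/

open Set

theorem IsPreconnected.inter_frontier_nonempty_of_inter_closure {X : Type*} [TopologicalSpace X]
    {Q K : Set X} (hQ : IsPreconnected Q) (hK : (Q ∩ closure K).Nonempty)
    (hKc : (Q ∩ closure Kᶜ).Nonempty) : (Q ∩ frontier K).Nonempty := by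
  rw [frontier_eq_closure_inter_closure]
  refine isPreconnected_closed_iff.1 hQ _ _ isClosed_closure isClosed_closure ?_ hK hKc
  intro x _
  by_cases hx : x ∈ K
  · exact Or.inl (subset_closure hx)
  · exact Or.inr (subset_closure hx)

theorem Convex.exists_dual_ne_zero_le_of_mem_frontier {E : Type*} [NormedAddCommGroup E]
    [NormedSpace ℝ E] [FiniteDimensional ℝ E] {K : Set E} (hK : Convex ℝ K) {x : E}
    (hx : x ∈ frontier K) : ∃ f : StrongDual ℝ E, f ≠ 0 ∧ ∀ z ∈ closure K, f z ≤ f x := by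
  by_cases hint : (interior K).Nonempty
  · obtain ⟨f, hf0, hf⟩ := geometric_hahn_banach_of_nonempty_interior_point hK hx.2 hint
    exact ⟨f, hf0, closure_minimal hf (isClosed_le f.continuous continuous_const)⟩
  -- Otherwise `K` lies in a proper affine subspace: take a functional vanishing on its direction.
  have hspan : (affineSpan ℝ K).direction < ⊤ := by
    rw [lt_top_iff_ne_top, Ne, AffineSubspace.direction_eq_top_iff_of_nonempty
      ((affineSpan_nonempty ℝ).2 (closure_nonempty_iff.1 ⟨x, hx.1⟩)),
      ← hK.interior_nonempty_iff_affineSpan_eq_top]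
    exact hint
  obtain ⟨f, hf0, hf⟩ := Submodule.exists_dual_map_eq_bot_of_lt_top hspan inferInstance
  have hclosure : closure K ⊆ affineSpan ℝ K :=
    closure_minimal (subset_affineSpan ℝ K) (AffineSubspace.closed_of_finiteDimensional _)
  refine ⟨LinearMap.toContinuousLinearMap f, by simpa using hf0, fun z hz => le_of_eq ?_⟩
  have hzx : z -ᵥ x ∈ (affineSpan ℝ K).direction :=
    AffineSubspace.vsub_mem_direction (hclosure hz) (hclosure hx.1)
  have : f (z - x) = 0 := by
    simpa [hf] using Submodule.mem_map_of_mem (f := f) hzx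
  simpa [sub_eq_zero] using this

section Coordinates

variable {ι : Type*} [Fintype ι]

structure IsDominantNormal (C : Set (ι → ℝ)) (x u : ι → ℝ) (i : ι) : Prop where
  mem : x ∈ C
  ne_zero : u i ≠ 0
  abs_le : ∀ k, |u k| ≤ |u i|
  dotProduct_sub_nonpos : ∀ z ∈ C, u ⬝ᵥ (z - x) ≤ 0

theorem exists_abs_le_abs_ne_zero {u : ι → ℝ} (hu : u ≠ 0) :
    ∃ i, u i ≠ 0 ∧ ∀ k, |u k| ≤ |u i| := by
  obtain ⟨k, hk⟩ := Function.ne_iff.1 hu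
  have : Nonempty ι := ⟨k⟩
  obtain ⟨i, hi⟩ := Finite.exists_max fun k => |u k|
  refine ⟨i, fun hi0 => hk ?_, hi⟩
  simpa [hi0] using hi k

theorem Convex.exists_isDominantNormal_of_mem_frontier [DecidableEq ι] {K : Set (ι → ℝ)}
    (hK : Convex ℝ K) {x : ι → ℝ} (hx : x ∈ frontier K) :
    ∃ u i, IsDominantNormal (closure K) x u i := by
  obtain ⟨f, hf0, hf⟩ := hK.exists_dual_ne_zero_le_of_mem_frontier hx
  set u : ι → ℝ := fun k => f (Pi.single k 1)
  have hfu : ∀ v, f v = u ⬝ᵥ v := by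
    intro v
    conv_lhs => rw [pi_eq_sum_univ' v]
    simp [u, dotProduct, mul_comm]
  have hu0 : u ≠ 0 := fun hu => hf0 (by ext v; simp [hfu v, hu])
  obtain ⟨i, hi0, hi⟩ := exists_abs_le_abs_ne_zero hu0
  refine ⟨u, i, ⟨frontier_subset_closure hx, hi0, hi, fun z hz => ?_⟩⟩
  rw [← hfu, map_sub, sub_nonpos]
  exact hf z hz

theorem mul_le_of_dotProduct_nonpos [DecidableEq ι] {u v : ι → ℝ} {i : ι} {a : ℝ}
    (hdom : ∀ k, |u k| ≤ |u i|) (hv : ∀ k ≠ i, |v k| ≤ a) (huv : u ⬝ᵥ v ≤ 0) :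
    u i * v i ≤ (Fintype.card ι - 1 : ℕ) * (|u i| * a) := by
  have hrest : ∑ k ∈ Finset.univ.erase i, -(u k * v k) ≤
      (Finset.univ.erase i).card • (|u i| * a) := by
    refine Finset.sum_le_card_nsmul _ _ _ fun k hk => ?_
    calc -(u k * v k) ≤ |u k| * |v k| := by rw [← abs_mul]; exact neg_le_abs _
      _ ≤ |u i| * a := mul_le_mul (hdom k) (hv k (Finset.ne_of_mem_erase hk)) (abs_nonneg _)
          (abs_nonneg _)
  rw [dotProduct, ← Finset.add_sum_erase _ _ (Finset.mem_univ i)] at huv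
  rw [Finset.card_erase_of_mem (Finset.mem_univ i), Finset.card_univ, nsmul_eq_mul,
    Finset.sum_neg_distrib] at hrest
  linarith

theorem IsDominantNormal.sub_le [DecidableEq ι] {C : Set (ι → ℝ)} {x y u v : ι → ℝ} {i : ι}
    {a : ℝ} (hx : IsDominantNormal C x u i) (hy : IsDominantNormal C y v i)
    (hsign : 0 < u i ↔ 0 < v i) (hxy : ∀ k ≠ i, |x k - y k| ≤ a) :
    x i - y i ≤ (Fintype.card ι - 1 : ℕ) * a := by
  rcases hx.ne_zero.lt_or_gt with hneg | hpos
  · have := mul_le_of_dotProduct_nonpos hx.abs_le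
      (fun k hk => by simpa [abs_sub_comm] using hxy k hk) (hx.dotProduct_sub_nonpos y hy.mem)
    rw [abs_of_neg hneg, Pi.sub_apply] at this
    exact le_of_mul_le_mul_left (by linarith) (neg_pos.2 hneg)
  · have hvpos := hsign.1 hpos
    have := mul_le_of_dotProduct_nonpos hy.abs_le hxy (hy.dotProduct_sub_nonpos x hx.mem)
    rw [abs_of_pos hvpos] at this
    exact le_of_mul_le_mul_left (by linarith) hvpos

theorem card_le_mul_pow_of_column_spread_le [DecidableEq ι] {A : Finset (ι → ℤ)} {B : Finset ℤ}
    {i : ι} {L : ℕ} (hB : ∀ j ∈ A, ∀ k, j k ∈ B)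
    (hcol : ∀ j ∈ A, ∀ j' ∈ A, (∀ k ≠ i, j k = j' k) → j i ≤ j' i + L) :
    A.card ≤ (L + 1) * B.card ^ (Fintype.card ι - 1) := by
  set π : (ι → ℤ) → ({k // k ≠ i} → ℤ) := fun j k => j k
  have hfibre : ∀ b ∈ A.image π, (A.filter (π · = b)).card ≤ L + 1 := by
    intro b hb
    obtain ⟨j₀, hj₀, hmin⟩ := Finset.exists_min_image (A.filter (π · = b)) (· i)
      (by simpa [Finset.filter_nonempty_iff] using hb)
    have hcol₀ : ∀ j ∈ A.filter (π · = b), ∀ k ≠ i, j k = j₀ k := by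
      intro j hj k hk
      simp only [Finset.mem_filter] at hj hj₀
      exact congrFun (hj.2.trans hj₀.2.symm) ⟨k, hk⟩
    calc (A.filter (π · = b)).card ≤ (Finset.Icc (j₀ i) (j₀ i + L)).card := by
          refine Finset.card_le_card_of_injOn (· i) (fun j hj => ?_) fun j hj j' hj' hjj' => ?_
          · exact Finset.mem_Icc.2 ⟨hmin j hj, hcol j (Finset.mem_filter.1 hj).1 j₀
              (Finset.mem_filter.1 hj₀).1 (hcol₀ j hj)⟩
          · funext k
            by_cases hk : k = i
            · subst hk; exact hjj'
            · rw [hcol₀ j hj k hk, hcol₀ j' hj' k hk]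
      _ = L + 1 := by simp [add_sub_cancel_left, add_assoc]
  calc A.card ≤ (L + 1) * (A.image π).card := Finset.card_le_mul_card_image _ _ hfibre
    _ ≤ (L + 1) * (Fintype.piFinset fun _ : {k // k ≠ i} => B).card := by
        gcongr
        intro b hb
        obtain ⟨j, hj, rfl⟩ := Finset.mem_image.1 hb
        exact Fintype.mem_piFinset.2 fun k => hB j hj k
    _ = (L + 1) * B.card ^ (Fintype.card ι - 1) := by
        simp [Fintype.card_subtype_compl]

end Coordinates

section Grid

variable {ι : Type*}

def cube (a : ℝ) (j : ι → ℤ) : Set (ι → ℝ) :=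
  univ.pi fun i => Icc (a * j i) (a * (j i + 1))

def boundaryCubes (a : ℝ) (K : Set (ι → ℝ)) : Set (ι → ℤ) :=
  {j | (cube a j ∩ closure K).Nonempty ∧ (cube a j ∩ closure Kᶜ).Nonempty}

variable {a : ℝ} {j j' : ι → ℤ} {x y : ι → ℝ}

theorem abs_sub_le_of_mem_cube (hx : x ∈ cube a j) (hy : y ∈ cube a j') {k : ι}
    (hk : j k = j' k) : |x k - y k| ≤ a := by
  obtain ⟨hjx, hxj⟩ := hx k (mem_univ k)
  obtain ⟨hjy, hyj⟩ := hy k (mem_univ k)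
  rw [hk] at hjx hxj
  rw [abs_sub_le_iff]
  constructor <;> linarith

theorem le_add_of_mem_cube (ha : 0 < a) (hx : x ∈ cube a j) (hy : y ∈ cube a j') {k : ι} {n : ℝ}
    (hxy : x k - y k ≤ n * a) : (j k : ℝ) ≤ j' k + n + 1 := by
  have hxk := (hx k (mem_univ k)).1
  have hyk := (hy k (mem_univ k)).2
  have : a * j k ≤ a * (j' k + n + 1) := by linarith
  exact le_of_mul_le_mul_left this ha

theorem mem_Icc_floor_of_mem_cube {r : ℝ} (ha : 0 < a) (hx : x ∈ cube a j)
    (hxr : x ∈ univ.pi fun _ : ι => Icc (-r) r) (k : ι) :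
    j k ∈ Finset.Icc (-⌊r / a⌋ - 1) ⌊r / a⌋ := by
  obtain ⟨hjx, hxj⟩ := hx k (mem_univ k)
  obtain ⟨hrx, hxr⟩ := hxr k (mem_univ k)
  have hupper : j k ≤ ⌊r / a⌋ := Int.le_floor.2 <| (le_div_iff₀ ha).2 (by linarith)
  have hlower : -j k - 1 ≤ ⌊r / a⌋ :=
    Int.le_floor.2 <| (le_div_iff₀ ha).2 (by push_cast; linarith)
  rw [Finset.mem_Icc]
  omega

theorem card_Icc_floor_le {r : ℝ} (ha : 0 < a) (hr : 0 ≤ r) :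
    ((Finset.Icc (-⌊r / a⌋ - 1) ⌊r / a⌋).card : ℝ) ≤ 2 * (r / a) + 2 := by
  have hfloor : (0 : ℤ) ≤ ⌊r / a⌋ := Int.floor_nonneg.2 (by positivity)
  have hcard : ((Finset.Icc (-⌊r / a⌋ - 1) ⌊r / a⌋).card : ℤ) = 2 * ⌊r / a⌋ + 2 := by
    rw [Int.card_Icc]; omega
  rw [← Int.cast_natCast, hcard]
  push_cast
  linarith [Int.floor_le (r / a)]

end Grid

section Counting

variable {ι : Type*} [Fintype ι]

theorem Convex.exists_isDominantNormal_of_mem_boundaryCubes [DecidableEq ι] {K : Set (ι → ℝ)}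
    (hK : Convex ℝ K) {a : ℝ} {j : ι → ℤ} (hj : j ∈ boundaryCubes a K) :
    ∃ x u i, x ∈ cube a j ∧ IsDominantNormal (closure K) x u i := by
  have hcube : Convex ℝ (cube a j) := convex_pi fun _ _ => convex_Icc _ _
  obtain ⟨x, hxj, hx⟩ := hcube.isPreconnected.inter_frontier_nonempty_of_inter_closure hj.1 hj.2
  obtain ⟨u, i, hu⟩ := hK.exists_isDominantNormal_of_mem_frontier hx
  exact ⟨x, u, i, hxj, hu⟩

theorem IsDominantNormal.index_le_add [DecidableEq ι] {C : Set (ι → ℝ)} {a : ℝ} {j j' : ι → ℤ}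
    {x y u v : ι → ℝ} {i : ι} (ha : 0 < a) (hxj : x ∈ cube a j) (hyj : y ∈ cube a j')
    (hx : IsDominantNormal C x u i) (hy : IsDominantNormal C y v i) (hsign : 0 < u i ↔ 0 < v i)
    (hjj' : ∀ k ≠ i, j k = j' k) : j i ≤ j' i + Fintype.card ι := by
  have h := le_add_of_mem_cube ha hxj hyj <|
    hx.sub_le hy hsign fun k hk => abs_sub_le_of_mem_cube hxj hyj (hjj' k hk)
  have hn : ((Fintype.card ι - 1 : ℕ) : ℝ) + 1 = Fintype.card ι := by
    rw [Nat.cast_sub (Fintype.card_pos_iff.2 ⟨i⟩)]; ring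
  rw [add_assoc, hn] at h
  exact_mod_cast h

theorem Convex.ncard_boundaryCubes_le {K : Set (ι → ℝ)} (hK : Convex ℝ K) {r a : ℝ}
    (hKr : K ⊆ univ.pi fun _ => Icc (-r) r) (ha : 0 < a) :
    (boundaryCubes a K).ncard ≤ 2 * Fintype.card ι * (Fintype.card ι + 1) *
      (Finset.Icc (-⌊r / a⌋ - 1) ⌊r / a⌋).card ^ (Fintype.card ι - 1) := by
  classical
  set B := Finset.Icc (-⌊r / a⌋ - 1) ⌊r / a⌋
  obtain hempty | ⟨j₀, hj₀⟩ := (boundaryCubes a K).eq_empty_or_nonempty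
  · simp [hempty]
  have : Nonempty ι := by
    obtain ⟨-, -, i₀, -⟩ := hK.exists_isDominantNormal_of_mem_boundaryCubes hj₀
    exact ⟨i₀⟩
  choose! x u I hxj hxu using fun j (hj : j ∈ boundaryCubes a K) =>
    hK.exists_isDominantNormal_of_mem_boundaryCubes hj
  have hKr' : closure K ⊆ univ.pi fun _ => Icc (-r) r :=
    closure_minimal hKr (isClosed_set_pi fun _ _ => isClosed_Icc)
  set F := (Fintype.piFinset fun _ : ι => B).filter (· ∈ boundaryCubes a K)
  have hF : (boundaryCubes a K).ncard = F.card := by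
    rw [← ncard_coe_finset]
    congr 1
    ext j
    simp only [F, Finset.coe_filter, Fintype.mem_piFinset, mem_ofPred_eq, iff_and_self]
    exact fun hj => mem_Icc_floor_of_mem_cube ha (hxj j hj) (hKr' (hxu j hj).mem)
  set cls : (ι → ℤ) → ι × Bool := fun j => (I j, decide (0 < u j (I j)))
  rw [hF, Finset.card_eq_sum_card_fiberwise (f := cls) (t := Finset.univ) fun _ _ =>
    Finset.mem_univ _]
  calc ∑ p, (F.filter (cls · = p)).card
      ≤ ∑ _p : ι × Bool, (Fintype.card ι + 1) * B.card ^ (Fintype.card ι - 1) := by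
        refine Finset.sum_le_sum fun ⟨i, s⟩ _ => card_le_mul_pow_of_column_spread_le (i := i)
          (fun j hj => Fintype.mem_piFinset.1 (Finset.mem_filter.1 (Finset.mem_filter.1 hj).1).1)
          fun j hj j' hj' hjj' => ?_
        simp only [F, Finset.mem_filter, cls, Prod.ext_iff] at hj hj'
        obtain ⟨⟨-, hjS⟩, hIj, hjs⟩ := hj
        obtain ⟨⟨-, hj'S⟩, hIj', hj's⟩ := hj'
        rw [hIj] at hjs
        rw [hIj'] at hj's
        exact (hIj ▸ hxu j hjS).index_le_add ha (hxj j hjS) (hxj j' hj'S) (hIj' ▸ hxu j' hj'S)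
          (decide_eq_decide.1 (hjs.trans hj's.symm)) hjj'
    _ = 2 * Fintype.card ι * (Fintype.card ι + 1) * B.card ^ (Fintype.card ι - 1) := by
        simp [Finset.card_univ]; ring

end Counting

/-- every convex subset of the unit cube satisfies the boundary
condition, with a constant depending only on the dimension. -/
theorem stmt_7 (d : ℕ) (hd : 1 ≤ d) :
    ∃ C : ℝ, 0 < C ∧ ∀ K : Set (Fin d → ℝ), Convex ℝ K →
      K ⊆ Set.univ.pi (fun _ => Set.Icc (-(1/2) : ℝ) (1/2)) →
      ∀ a : ℝ, 0 < a → a ≤ 1 →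
      (Set.ncard {j : Fin d → ℤ |
        (Set.univ.pi (fun i => Set.Icc (a * (j i : ℝ)) (a * ((j i : ℝ) + 1))) ∩
          closure K).Nonempty ∧
        (Set.univ.pi (fun i => Set.Icc (a * (j i : ℝ)) (a * ((j i : ℝ) + 1))) ∩
          closure Kᶜ).Nonempty} : ℝ) ≤ C * a ^ ((1 : ℤ) - d) := by
  have hd₀ : (0 : ℝ) < d := by exact_mod_cast hd
  refine ⟨2 * d * (d + 1) * 3 ^ (d - 1), by positivity, fun K hK hKr a ha ha1 => ?_⟩
  have hcount := hK.ncard_boundaryCubes_le hKr ha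
  rw [Fintype.card_fin] at hcount
  have hB : ((Finset.Icc (-⌊(1 / 2 : ℝ) / a⌋ - 1) ⌊(1 / 2 : ℝ) / a⌋).card : ℝ) ≤ 3 * a⁻¹ := by
    have hinv : 1 ≤ a⁻¹ := (one_le_inv₀ ha).2 ha1
    have hhalf : 2 * ((1 / 2 : ℝ) / a) = a⁻¹ := by field_simp
    linarith [card_Icc_floor_le ha (r := 1 / 2) (by norm_num)]
  have hzpow : a ^ ((1 : ℤ) - d) = a⁻¹ ^ (d - 1) := by
    rw [show (1 : ℤ) - d = -((d - 1 : ℕ) : ℤ) by omega, zpow_neg, zpow_natCast, inv_pow]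
  calc ((boundaryCubes a K).ncard : ℝ)
      ≤ 2 * d * (d + 1) * ((Finset.Icc (-⌊(1 / 2 : ℝ) / a⌋ - 1) ⌊(1 / 2 : ℝ) / a⌋).card : ℝ)
          ^ (d - 1) := by exact_mod_cast hcount
    _ ≤ 2 * d * (d + 1) * (3 * a⁻¹) ^ (d - 1) := by gcongr
    _ = 2 * d * (d + 1) * 3 ^ (d - 1) * a ^ ((1 : ℤ) - d) := by rw [hzpow, mul_pow]; ring
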